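/- The density of the generalized Simons cone C_{1,3} ⊆ ℝ^6 is D(1,3) = 9√3·π/32, and the chain of strict inequalities D(2,2) < E(1) < D(1,3) holds, i.e. 3/2 < √(2π/e) < 9√3·π/32. (In particular, the density of C_{2,2} is strictly less than the entropy of the round circle, while the density of C_{1,3} strictly exceeds it.) -/

import Mathlib

/-- `σ_n`, the area of the unit sphere `S^n ⊆ ℝ^{n+1}`. -/
noncomputable def sphereArea (n : ℕ) : ℝ :=
  ((n : ℝ) + 1) * Real.pi ^ (((n : ℝ) + 1) / 2) / Real.Gamma (((n : ℝ) + 3) / 2)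

/-- `D(m,l)`, the density at the vertex of the generalized Simons cone `C_{m,l}`. -/
noncomputable def simonsDensity (m l : ℕ) : ℝ :=
  (sphereArea m * sphereArea l / sphereArea (m + l)) *
    ((m : ℝ) / ((m : ℝ) + (l : ℝ))) ^ ((m : ℝ) / 2) *
    ((l : ℝ) / ((m : ℝ) + (l : ℝ))) ^ ((l : ℝ) / 2)

/-- Stone's formula for the entropy of the round `n`-sphere (with `0 ^ 0 = 1`). -/
noncomputable def sphereEntropy (n : ℕ) : ℝ :=
  2 * Real.sqrt Real.pi * ((n : ℝ) / (2 * Real.exp 1)) ^ ((n : ℝ) / 2) /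
    Real.Gamma (((n : ℝ) + 1) / 2)

/-!
Since `Γ(s + 1) = s Γ(s)`, the sphere areas satisfy `σ_{n+2} = 2π σ_n / (n + 1)`, so every
`σ_n` needed here follows from `σ_0 = 2` and `σ_1 = 2π`: `D(1,3) = 9√3π/32` and `D(2,2) = 3/2`,
while `E(1) = √(2π/e)` because `Γ(1) = 1`. After squaring, the two inequalities become
`9e < 8π` and `2048 < 243πe`, which decimal bounds on `π` and `e` settle.
-/

open Real

theorem sphereArea_add_two (n : ℕ) :
    sphereArea (n + 2) = 2 * π / (n + 1) * sphereArea n := by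
  have hΓ : Gamma (((n : ℝ) + 5) / 2) = ((n + 3) / 2) * Gamma (((n : ℝ) + 3) / 2) := by
    rw [← Gamma_add_one (by positivity)]; ring_nf
  have hπ : π ^ (((n : ℝ) + 3) / 2) = π ^ (((n : ℝ) + 1) / 2) * π := by
    rw [← rpow_add_one pi_ne_zero]; ring_nf
  have hG : Gamma (((n : ℝ) + 3) / 2) ≠ 0 := (Gamma_pos_of_pos (by positivity)).ne'
  simp only [sphereArea]
  push_cast
  rw [show (n : ℝ) + 2 + 1 = n + 3 by ring, show (n : ℝ) + 2 + 3 = n + 5 by ring, hΓ, hπ]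
  field_simp

theorem sphereArea_zero : sphereArea 0 = 2 := by
  have hΓ : Gamma (3 / 2) = √π / 2 := by
    rw [show (3 / 2 : ℝ) = 1 / 2 + 1 by norm_num, Gamma_add_one (by norm_num),
      Gamma_one_half_eq]
    ring
  have : √π ≠ 0 := (sqrt_pos.2 pi_pos).ne'
  norm_num [sphereArea, hΓ]
  rw [← sqrt_eq_rpow]
  field_simp

theorem sphereArea_one : sphereArea 1 = 2 * π := by
  norm_num [sphereArea, Gamma_two]

theorem sphereArea_two : sphereArea 2 = 4 * π := by
  rw [sphereArea_add_two, sphereArea_zero]; push_cast; ring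

theorem sphereArea_three : sphereArea 3 = 2 * π ^ 2 := by
  rw [sphereArea_add_two, sphereArea_one]; push_cast; ring

theorem sphereArea_four : sphereArea 4 = 8 * π ^ 2 / 3 := by
  rw [sphereArea_add_two, sphereArea_two]; push_cast; ring

theorem simonsDensity_one_three_eq : simonsDensity 1 3 = 9 * √3 * π / 32 := by
  have h1 : ((1 : ℝ) / 4) ^ ((1 : ℝ) / 2) = 1 / 2 := by
    rw [← sqrt_eq_rpow, show (1 / 4 : ℝ) = (1 / 2) ^ 2 by norm_num, sqrt_sq (by norm_num)]
  have h3 : ((3 : ℝ) / 4) ^ ((3 : ℝ) / 2) = 3 * √3 / 8 := by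
    rw [show (3 / 2 : ℝ) = (3 : ℕ) * (1 / 2) by norm_num, rpow_mul (by norm_num), rpow_natCast,
      ← sqrt_eq_rpow, show ((3 : ℝ) / 4) ^ 3 = (3 / 8) ^ 2 * 3 by norm_num,
      sqrt_mul (by positivity), sqrt_sq (by norm_num)]
    ring
  norm_num [simonsDensity, sphereArea_one, sphereArea_three, sphereArea_four, h1, h3]
  field_simp
  ring

theorem simonsDensity_two_two_eq : simonsDensity 2 2 = 3 / 2 := by
  norm_num [simonsDensity, sphereArea_two, sphereArea_four]
  field_simp
  ring

theorem sphereEntropy_one : sphereEntropy 1 = √(2 * π / exp 1) := by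
  have h4 : (2 : ℝ) = √4 := by rw [show (4 : ℝ) = 2 ^ 2 by norm_num, sqrt_sq two_pos.le]
  rw [sphereEntropy, Nat.cast_one, show ((1 : ℝ) + 1) / 2 = 1 by norm_num, Gamma_one, div_one,
    ← sqrt_eq_rpow, h4, ← sqrt_mul (by norm_num), ← sqrt_mul (by positivity)]
  congr 1
  field_simp
  ring

theorem nine_mul_exp_one_lt_eight_mul_pi : 9 * exp 1 < 8 * π := by
  linarith [pi_gt_d2, exp_one_lt_d9]

theorem lt_pi_mul_exp_one : (2048 : ℝ) / 243 < π * exp 1 := by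
  nlinarith [pi_gt_d2, exp_one_gt_d9]

theorem simonsDensity_one_three :
    simonsDensity 1 3 = 9 * Real.sqrt 3 * Real.pi / 32 ∧
      simonsDensity 2 2 < sphereEntropy 1 ∧ sphereEntropy 1 < simonsDensity 1 3 := by
  refine ⟨simonsDensity_one_three_eq, ?_, ?_⟩
  · rw [simonsDensity_two_two_eq, sphereEntropy_one, lt_sqrt (by norm_num),
      lt_div_iff₀ (exp_pos 1)]
    linarith [nine_mul_exp_one_lt_eight_mul_pi]
  · rw [sphereEntropy_one, simonsDensity_one_three_eq, sqrt_lt' (by positivity),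
      div_lt_iff₀ (exp_pos 1), div_pow, mul_pow, mul_pow, sq_sqrt (by norm_num)]
    nlinarith [lt_pi_mul_exp_one, pi_pos]
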